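/- arXiv:1907.01182 — 2 statements merged into one kernel-verified Lean document; each statement's English description precedes it below -/
import Mathlib

section
/- Explicit volume-ratio bound in Lemma 2.3 (case K ≤ 0): For all real numbers a > 0, N ≥ 1 and 0 < r ≤ R, one has ∫₀^R (sinh(a t))^{N-1} dt ≤ e^{(N-1) a R} (R/r)^N ∫₀^r (sinh(a t))^{N-1} dt. -/
lemma sinh_le_mul_exp (x : ℝ) (hx : 0 ≤ x) : Real.sinh x ≤ x * Real.exp x := by
  rw [Real.sinh_eq]
  have h1 : 1 + (-(2 * x)) ≤ Real.exp (-(2 * x)) := by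
    linarith [Real.add_one_le_exp (-(2 * x))]
  have h2 : Real.exp (-x) = Real.exp (-(2 * x)) * Real.exp x := by
    rw [← Real.exp_add]; ring_nf
  nlinarith [Real.exp_pos x, Real.exp_pos (-(2 * x))]

lemma le_sinh (x : ℝ) (hx : 0 ≤ x) : x ≤ Real.sinh x :=
  Real.self_le_sinh_iff.2 hx

/-- Explicit volume-ratio bound in Lemma 2.3 (case `K ≤ 0`). -/
theorem model_volume_ratio_bound (a N r R : ℝ) (ha : 0 < a) (hN : 1 ≤ N)
    (hr : 0 < r) (hrR : r ≤ R) :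
    (∫ t in (0:ℝ)..R, Real.sinh (a * t) ^ (N - 1)) ≤
      Real.exp ((N - 1) * a * R) * (R / r) ^ N *
        ∫ t in (0:ℝ)..r, Real.sinh (a * t) ^ (N - 1) := by
  have hR : 0 < R := lt_of_lt_of_le hr hrR
  set c : ℝ := N - 1 with hc
  have hc0 : 0 ≤ c := by simp [hc]; linarith
  have hN0 : 0 < N := by linarith
  -- continuity / integrability
  have hcont : ∀ b : ℝ, ContinuousOn (fun t => Real.sinh (a * t) ^ c) (Set.uIcc 0 b) := by
    intro b
    exact ((Real.continuous_sinh.comp (continuous_const.mul continuous_id)).continuousOn).rpow_const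
      (fun x _ => Or.inr hc0)
  have hint : ∀ b : ℝ, IntervalIntegrable (fun t => Real.sinh (a * t) ^ c)
      MeasureTheory.volume 0 b := fun b => (hcont b).intervalIntegrable
  have hcont2 : ∀ b : ℝ, ContinuousOn (fun t : ℝ => (a * t) ^ c) (Set.uIcc 0 b) := by
    intro b
    exact ((continuous_const.mul continuous_id).continuousOn).rpow_const (fun x _ => Or.inr hc0)
  have hint2 : ∀ b : ℝ, IntervalIntegrable (fun t : ℝ => (a * t) ^ c)
      MeasureTheory.volume 0 b := fun b => (hcont2 b).intervalIntegrable
  -- value of the power integral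
  have hpow : ∀ b : ℝ, 0 < b → (∫ t in (0:ℝ)..b, (a * t) ^ c) = a ^ c * (b ^ N / N) := by
    intro b hb
    have : (∫ t in (0:ℝ)..b, (a * t) ^ c) = ∫ t in (0:ℝ)..b, a ^ c * t ^ c := by
      apply intervalIntegral.integral_congr
      intro t ht
      rw [Set.uIcc_of_le hb.le] at ht
      exact Real.mul_rpow ha.le ht.1
    rw [this, intervalIntegral.integral_const_mul, integral_rpow (Or.inl (by linarith))]
    have hb0 : (0:ℝ) ^ (c + 1) = 0 := Real.zero_rpow (by linarith)
    rw [hb0]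
    have : c + 1 = N := by simp [hc]
    rw [this]
    ring
  -- lower bound for the small integral
  have hlow : a ^ c * (r ^ N / N) ≤ ∫ t in (0:ℝ)..r, Real.sinh (a * t) ^ c := by
    rw [← hpow r hr]
    apply intervalIntegral.integral_mono_on hr.le (hint2 r) (hint r)
    intro t ht
    have hat : 0 ≤ a * t := mul_nonneg ha.le ht.1
    exact Real.rpow_le_rpow hat (le_sinh _ hat) hc0
  -- upper bound for the big integral
  have hup : (∫ t in (0:ℝ)..R, Real.sinh (a * t) ^ c) ≤
      Real.exp (c * a * R) * (a ^ c * (R ^ N / N)) := by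
    have key : (∫ t in (0:ℝ)..R, Real.sinh (a * t) ^ c) ≤
        ∫ t in (0:ℝ)..R, Real.exp (c * a * R) * (a * t) ^ c := by
      apply intervalIntegral.integral_mono_on hR.le (hint R)
        ((hint2 R).const_mul _)
      intro t ht
      have hat : 0 ≤ a * t := mul_nonneg ha.le ht.1
      have h1 : Real.sinh (a * t) ≤ (a * t) * Real.exp (a * R) := by
        calc Real.sinh (a * t) ≤ (a * t) * Real.exp (a * t) := sinh_le_mul_exp _ hat
          _ ≤ (a * t) * Real.exp (a * R) := by
              apply mul_le_mul_of_nonneg_left _ hat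
              exact Real.exp_le_exp.2 (by nlinarith [ht.2])
      calc Real.sinh (a * t) ^ c ≤ ((a * t) * Real.exp (a * R)) ^ c :=
            Real.rpow_le_rpow (hat.trans (le_sinh _ hat)) h1 hc0
        _ = (a * t) ^ c * Real.exp (a * R) ^ c :=
            Real.mul_rpow hat (Real.exp_pos _).le
        _ = Real.exp (c * a * R) * (a * t) ^ c := by
            rw [← Real.exp_mul]; ring_nf
    calc (∫ t in (0:ℝ)..R, Real.sinh (a * t) ^ c) ≤ _ := key
      _ = Real.exp (c * a * R) * (a ^ c * (R ^ N / N)) := by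
          rw [intervalIntegral.integral_const_mul, hpow R hR]
  -- combine
  have hRr : (R / r) ^ N * r ^ N = R ^ N := by
    rw [Real.div_rpow hR.le hr.le, div_mul_cancel₀]
    exact (Real.rpow_pos_of_pos hr N).ne'
  have hexp : 0 < Real.exp (c * a * R) := Real.exp_pos _
  have hfrac : (0:ℝ) < (R / r) ^ N := Real.rpow_pos_of_pos (div_pos hR hr) N
  calc (∫ t in (0:ℝ)..R, Real.sinh (a * t) ^ c)
      ≤ Real.exp (c * a * R) * (a ^ c * (R ^ N / N)) := hup
    _ = Real.exp (c * a * R) * (R / r) ^ N * (a ^ c * (r ^ N / N)) := by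
        rw [← hRr]; ring
    _ ≤ Real.exp (c * a * R) * (R / r) ^ N *
        ∫ t in (0:ℝ)..r, Real.sinh (a * t) ^ c := by
        apply mul_le_mul_of_nonneg_left hlow (by positivity)
end

section
/- Abstract form of Proposition A.4: Let X be a paracompact Hausdorff topological space and let σ : X → X be a continuous involution (σ ∘ σ = id) without fixed points. Then the quotient space X/∼, where x ∼ σ(x), equipped with the quotient topology, is paracompact. -/
/-!
Identifying `x` with `σ x` is passing to the orbit space of the two-element group `{1, σ}`.
For a finite group `G` acting by homeomorphisms the quotient map `q` is open, so the `q`-images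
of a locally finite open refinement of the pulled-back cover are an open refinement of the
cover. They are locally finite at `q x`: if `U ∋ x` is so small that each `g • U` lies in a
neighbourhood `N g` of `g • x` meeting finitely many members, then `q⁻¹ (q U) = ⋃ g, g • U`
meets only members meeting some `N g`.
-/

open Set Filter Topology MulAction

section FiniteGroupAction

variable {G X : Type*} [Group G] [Finite G] [MulAction G X] [TopologicalSpace X]
  [ContinuousConstSMul G X]

theorem LocallyFinite.image_quotientMk_orbitRel {ι : Type*} {t : ι → Set X}
    (ht : LocallyFinite t) : LocallyFinite fun i => Quotient.mk (orbitRel G X) '' t i := by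
  intro y
  induction y using Quotient.inductionOn with | h x => ?_
  choose N hN hNfin using fun g : G => ht (g • x)
  set U : Set X := ⋂ g : G, (g • ·) ⁻¹' N g
  have hU : U ∈ 𝓝 x :=
    iInter_mem.2 fun g => (continuous_const_smul g).continuousAt.preimage_mem_nhds (hN g)
  refine ⟨Quotient.mk _ '' U, isOpenQuotientMap_quotientMk.isOpenMap.image_mem_nhds hU,
    (finite_iUnion hNfin).subset ?_⟩
  rintro i ⟨_, ⟨w, hw, rfl⟩, v, hv, hvw⟩
  obtain ⟨g, rfl⟩ := Quotient.exact hvw.symm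
  exact mem_iUnion.2 ⟨g, _, hw, mem_iInter.1 hv g⟩

theorem paracompactSpace_quotient_orbitRel [ParacompactSpace X] :
    ParacompactSpace (Quotient (orbitRel G X)) where
  locallyFinite_refinement α s hso hscov := by
    have hq := isOpenQuotientMap_quotientMk (Γ := G) (T := X)
    obtain ⟨β, t, hto, htcov, htlf, htref⟩ := ParacompactSpace.locallyFinite_refinement α
      (fun a => Quotient.mk _ ⁻¹' s a) (fun a => (hso a).preimage hq.continuous)
      (by rw [← preimage_iUnion, hscov, preimage_univ])
    refine ⟨β, fun b => Quotient.mk _ '' t b, fun b => hq.isOpenMap _ (hto b), ?_,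
      htlf.image_quotientMk_orbitRel, fun b => ?_⟩
    · rw [← image_iUnion, htcov, image_univ_of_surjective hq.surjective]
    · obtain ⟨a, ha⟩ := htref b
      exact ⟨a, (image_mono ha).trans (image_preimage_subset _ _)⟩

end FiniteGroupAction

theorem Subgroup.mem_zpowers_iff_of_mul_self_eq_one {G : Type*} [Group G] {e g : G}
    (he : e * e = 1) : g ∈ Subgroup.zpowers e ↔ g = 1 ∨ g = e := by
  refine ⟨fun ⟨k, hk⟩ => ?_, by rintro (rfl | rfl) <;> simp⟩
  have he2 : e ^ (2 : ℤ) = 1 := by rw [zpow_two, he]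
  obtain ⟨n, rfl | rfl⟩ := Int.even_or_odd' k
  · simp [← hk, zpow_mul, he2]
  · simp [← hk, zpow_add, zpow_mul, he2]

theorem Function.Involutive.orbitRel_zpowers_toPerm {α : Type*} {f : α → α}
    (hf : Function.Involutive f) :
    (orbitRel (Subgroup.zpowers (hf.toPerm f)) α).r = fun x y => y = x ∨ y = f x := by
  have hsq : hf.toPerm f * hf.toPerm f = 1 := Equiv.ext hf
  ext x y
  simp only [orbitRel_apply, mem_orbit_iff, Subtype.exists, Subgroup.mk_smul,
    Subgroup.mem_zpowers_iff_of_mul_self_eq_one hsq]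
  constructor
  · rintro ⟨g, rfl | rfl, rfl⟩
    exacts [Or.inl rfl, Or.inr (hf y).symm]
  · rintro (rfl | rfl)
    exacts [⟨1, Or.inl rfl, rfl⟩, ⟨_, Or.inr rfl, hf x⟩]

theorem paracompact_quotient_of_involution_general {X : Type*} [TopologicalSpace X]
    [ParacompactSpace X] (σ : X → X) (hcont : Continuous σ) (hinv : σ ∘ σ = id) :
    ParacompactSpace (Quot fun x y : X => y = x ∨ y = σ x) := by
  have hσ : Function.Involutive σ := congrFun hinv
  have hsq : hσ.toPerm σ * hσ.toPerm σ = 1 := Equiv.ext hσ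
  have : Finite (Subgroup.zpowers (hσ.toPerm σ)) :=
    (isOfFinOrder_iff_pow_eq_one.2 ⟨2, two_pos, by rw [sq, hsq]⟩).finite_zpowers.to_subtype
  have : ContinuousConstSMul (Subgroup.zpowers (hσ.toPerm σ)) X := by
    refine ⟨fun ⟨g, hg⟩ => ?_⟩
    rcases (Subgroup.mem_zpowers_iff_of_mul_self_eq_one hsq).1 hg with rfl | rfl
    exacts [continuous_id, hcont]
  rw [← hσ.orbitRel_zpowers_toPerm]
  exact paracompactSpace_quotient_orbitRel

/-- Abstract form of Proposition A.4: the quotient of a paracompact Hausdorff space by a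
fixed-point-free continuous involution is paracompact. -/
theorem paracompact_quotient_of_involution {X : Type*} [TopologicalSpace X] [T2Space X]
    [ParacompactSpace X] (σ : X → X) (hcont : Continuous σ) (hinv : σ ∘ σ = id)
    (hfix : ∀ x : X, σ x ≠ x) :
    ParacompactSpace (Quot fun x y : X => y = x ∨ y = σ x) :=
  paracompact_quotient_of_involution_general σ hcont hinv
end
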